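/- arXiv:2211.08043 — 6 statements merged into one kernel-verified Lean document; each statement's English description precedes it below -/
import Mathlib

section
/- Let f : ℝ≥0 → ℝ≥0 satisfy f(x) = x - c·x^{1+p} + o(x^{1+p}) as x → 0⁺ for positive constants c, p > 0. Then for x₁ > 0 small enough, the sequence defined by x_{n+1} = f(x_n) converges to 0 at the rate x_n ~ (c·p·n)^{-1/p} as n → ∞. -/
/-!
Near `0⁺` write `f x = x - r(x) x^{1+p}` with `r(x) → c`. For small `x₁` the orbit is positive,
decreasing, and loses at least `(c/2) x^{1+p}` per step, so it tends to `0`. Then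
`x_{n+1}/x_n → 1` and the increments of `a_n = x_n^{-p}` are `r(x_n)` times a difference quotient of
`u ↦ u^{-p}` at `1`, hence tend to `c p`; by Stolz–Cesàro `a_n / n → c p`, i.e.
`x_n (c p n)^{1/p} → 1`.
-/

open Filter Topology Set

theorem tendsto_div_natCast_of_tendsto_sub {a : ℕ → ℝ} {l : ℝ}
    (h : Tendsto (fun n => a (n + 1) - a n) atTop (𝓝 l)) :
    Tendsto (fun n : ℕ => a n / n) atTop (𝓝 l) := by
  have hsum : ∀ n : ℕ,
      a 0 / n + (n : ℝ)⁻¹ * ∑ i ∈ Finset.range n, (a (i + 1) - a i) = a n / n := by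
    intro n
    rw [Finset.sum_range_sub, inv_mul_eq_div, ← add_div, add_sub_cancel]
  simpa only [hsum, zero_add] using (tendsto_const_div_atTop_nhds_zero_nat (a 0)).add h.cesaro

theorem tendsto_zero_of_mul_rpow_le_sub_succ {x : ℕ → ℝ} {ε q : ℝ} (hx : ∀ n, 0 < x n)
    (hε : 0 < ε) (hq : 0 ≤ q) (hstep : ∀ n, ε * x n ^ q ≤ x n - x (n + 1)) :
    Tendsto x atTop (𝓝 0) := by
  have hanti : Antitone x := antitone_nat_of_succ_le fun n => by
    have := Real.rpow_pos_of_pos (hx n) q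
    nlinarith [hstep n]
  have hbdd : BddBelow (range x) := ⟨0, by rintro _ ⟨n, rfl⟩; exact (hx n).le⟩
  have hL : Tendsto x atTop (𝓝 (⨅ n, x n)) := tendsto_atTop_ciInf hanti hbdd
  have hL0 : 0 ≤ ⨅ n, x n := le_ciInf fun n => (hx n).le
  obtain hL0 | hLpos := hL0.eq_or_lt
  · rwa [← hL0] at hL
  have hdiff : Tendsto (fun n => x n - x (n + 1)) atTop (𝓝 0) := by
    simpa using hL.sub (hL.comp (tendsto_add_atTop_nat 1))
  have hbound : ∀ n, ε * (⨅ n, x n) ^ q ≤ x n - x (n + 1) := fun n =>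
    (mul_le_mul_of_nonneg_left (Real.rpow_le_rpow hL0 (ciInf_le hbdd n) hq) hε.le).trans
      (hstep n)
  have := ge_of_tendsto' hdiff hbound
  have := Real.rpow_pos_of_pos hLpos q
  nlinarith

theorem tendsto_rpow_neg_sub_of_tendsto_sub_div_rpow {x : ℕ → ℝ} {c p : ℝ} (hp : 0 < p)
    (hx : ∀ n, 0 < x n) (hne : ∀ n, x (n + 1) ≠ x n) (hlim : Tendsto x atTop (𝓝 0))
    (hrate : Tendsto (fun n => (x n - x (n + 1)) / x n ^ (1 + p)) atTop (𝓝 c)) :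
    Tendsto (fun n => x (n + 1) ^ (-p) - x n ^ (-p)) atTop (𝓝 (c * p)) := by
  set r := fun n => (x n - x (n + 1)) / x n ^ (1 + p)
  have hratio : ∀ n, x (n + 1) / x n = 1 - r n * x n ^ p := fun n => by
    have := (hx n).ne'
    have := (Real.rpow_pos_of_pos (hx n) p).ne'
    simp only [r, Real.rpow_add (hx n), Real.rpow_one]
    field_simp
    ring
  have key : ∀ n, x (n + 1) ^ (-p) - x n ^ (-p) =
      -(r n * slope (fun u => u ^ (-p)) 1 (x (n + 1) / x n)) := fun n => by
    have := (hx n).ne'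
    have := sub_ne_zero.2 (hne n)
    have := (Real.rpow_pos_of_pos (hx n) p).ne'
    simp only [r, slope_def_field, Real.one_rpow, Real.div_rpow (hx (n + 1)).le (hx n).le,
      Real.rpow_neg (hx n).le, Real.rpow_add (hx n), Real.rpow_one]
    field_simp
    ring
  have hxp : Tendsto (fun n => x n ^ p) atTop (𝓝 0) := by
    simpa [Real.zero_rpow hp.ne'] using hlim.rpow_const (Or.inr hp.le)
  have hu : Tendsto (fun n => x (n + 1) / x n) atTop (𝓝[≠] 1) := by
    refine tendsto_nhdsWithin_iff.2 ⟨?_, .of_forall fun n => ?_⟩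
    · simpa [hratio] using (tendsto_const_nhds (x := (1 : ℝ))).sub (hrate.mul hxp)
    · exact div_ne_one_of_ne (hne n)
  have hslope := hasDerivAt_iff_tendsto_slope.1
    (Real.hasDerivAt_rpow_const (x := 1) (p := -p) (Or.inl one_ne_zero))
  simp only [key]
  simpa using (hrate.mul (hslope.comp hu)).neg

theorem tendsto_mul_rpow_of_tendsto_rpow_neg_div {x : ℕ → ℝ} {l p : ℝ} (hx : ∀ n, 0 < x n)
    (hp : p ≠ 0) (hl : 0 < l) (h : Tendsto (fun n : ℕ => x n ^ (-p) / n) atTop (𝓝 l)) :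
    Tendsto (fun n : ℕ => x n * (l * n) ^ (1 / p)) atTop (𝓝 1) := by
  have hlim : Tendsto (fun n : ℕ => (l / (x n ^ (-p) / n)) ^ (1 / p)) atTop (𝓝 1) := by
    simpa [div_self hl.ne'] using (tendsto_const_nhds.div h hl.ne').rpow_const (p := 1 / p)
      (Or.inl (div_ne_zero hl.ne' hl.ne'))
  refine hlim.congr fun n => ?_
  rw [div_div_eq_mul_div, Real.rpow_neg (hx n).le, div_inv_eq_mul,
    Real.mul_rpow (by positivity) (Real.rpow_pos_of_pos (hx n) p).le, one_div,
    Real.rpow_rpow_inv (hx n).le hp, mul_comm]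

theorem tendsto_mul_rpow_of_tendsto_sub_div_rpow {x : ℕ → ℝ} {c p : ℝ} (hc : 0 < c)
    (hp : 0 < p) (hx : ∀ n, 0 < x n) (hne : ∀ n, x (n + 1) ≠ x n)
    (hlim : Tendsto x atTop (𝓝 0))
    (hrate : Tendsto (fun n => (x n - x (n + 1)) / x n ^ (1 + p)) atTop (𝓝 c)) :
    Tendsto (fun n : ℕ => x n * (c * p * n) ^ (1 / p)) atTop (𝓝 1) :=
  tendsto_mul_rpow_of_tendsto_rpow_neg_div hx hp.ne' (mul_pos hc hp)
    (tendsto_div_natCast_of_tendsto_sub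
      (tendsto_rpow_neg_sub_of_tendsto_sub_div_rpow hp hx hne hlim hrate))

theorem exists_forall_mem_Ioo_pos_and_mul_rpow_le {f : ℝ → ℝ} {c p : ℝ} (hc : 0 < c)
    (hp : 0 < p) (hr : Tendsto (fun x => (x - f x) / x ^ (1 + p)) (𝓝[>] 0) (𝓝 c)) :
    ∃ δ > 0, ∀ x ∈ Ioo 0 δ, 0 < f x ∧ c / 2 * x ^ (1 + p) ≤ x - f x := by
  have hxp : Tendsto (fun x : ℝ => x ^ p) (𝓝[>] 0) (𝓝 0) := by
    simpa [Real.zero_rpow hp.ne'] using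
      (Real.continuousAt_rpow_const 0 p (Or.inr hp.le)).tendsto.mono_left nhdsWithin_le_nhds
  have hlow : ∀ᶠ x in 𝓝[>] 0, c / 2 < (x - f x) / x ^ (1 + p) :=
    hr.eventually (lt_mem_nhds (half_lt_self hc))
  have hsmall : ∀ᶠ x in 𝓝[>] 0, (x - f x) / x ^ (1 + p) * x ^ p < 1 :=
    (hr.mul hxp).eventually (gt_mem_nhds (by rw [mul_zero]; exact one_pos))
  obtain ⟨δ, hδ, hsub⟩ :=
    mem_nhdsGT_iff_exists_Ioo_subset.1 ((hlow.and hsmall).and self_mem_nhdsWithin)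
  refine ⟨δ, hδ, fun x hx => ?_⟩
  obtain ⟨⟨hlow, hsmall⟩, hx0 : 0 < x⟩ := hsub hx
  have hx1p := Real.rpow_pos_of_pos hx0 (1 + p)
  rw [lt_div_iff₀ hx1p] at hlow
  rw [div_mul_eq_mul_div, div_lt_one hx1p, Real.rpow_add hx0, Real.rpow_one] at hsmall
  constructor
  · nlinarith [Real.rpow_pos_of_pos hx0 p]
  · linarith

theorem stmt_0_general (f : ℝ → ℝ) (c p : ℝ) (hc : 0 < c) (hp : 0 < p)
    (hasymp : Tendsto (fun x => (f x - x + c * x ^ (1 + p)) / x ^ (1 + p))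
      (nhdsWithin 0 (Set.Ioi 0)) (nhds 0)) :
    ∃ δ > (0:ℝ), ∀ x₁ : ℝ, 0 < x₁ → x₁ < δ →
      Tendsto (fun n : ℕ => f^[n] x₁) atTop (nhds 0) ∧
      Tendsto (fun n : ℕ => f^[n] x₁ * (c * p * (n : ℝ)) ^ (1 / p)) atTop (nhds 1) := by
  have hr : Tendsto (fun x => (x - f x) / x ^ (1 + p)) (𝓝[>] 0) (𝓝 c) := by
    have h := (tendsto_const_nhds (x := c)).sub hasymp
    rw [sub_zero] at h
    refine h.congr' ?_
    filter_upwards [self_mem_nhdsWithin] with x (hx : 0 < x)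
    field_simp [(Real.rpow_pos_of_pos hx (1 + p)).ne']
    ring
  obtain ⟨δ, hδ, hstep⟩ := exists_forall_mem_Ioo_pos_and_mul_rpow_le hc hp hr
  have hdec : ∀ x ∈ Ioo 0 δ, f x < x := fun x hx => by
    nlinarith [hstep x hx, Real.rpow_pos_of_pos hx.1 (1 + p)]
  have hmaps : MapsTo f (Ioo 0 δ) (Ioo 0 δ) := fun x hx =>
    ⟨(hstep x hx).1, (hdec x hx).trans hx.2⟩
  refine ⟨δ, hδ, fun x₁ hx₁ hx₁δ => ?_⟩
  have horbit : ∀ n, f^[n] x₁ ∈ Ioo 0 δ := fun n => hmaps.iterate n ⟨hx₁, hx₁δ⟩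
  have hsucc : ∀ n, f^[n + 1] x₁ = f (f^[n] x₁) := fun n => Function.iterate_succ_apply' f n x₁
  have hlim : Tendsto (fun n => f^[n] x₁) atTop (𝓝 0) :=
    tendsto_zero_of_mul_rpow_le_sub_succ (q := 1 + p) (fun n => (horbit n).1) (half_pos hc)
      (by positivity) fun n => by rw [hsucc]; exact (hstep _ (horbit n)).2
  refine ⟨hlim, tendsto_mul_rpow_of_tendsto_sub_div_rpow hc hp (fun n => (horbit n).1)
    (fun n => by rw [hsucc]; exact (hdec _ (horbit n)).ne) hlim ?_⟩
  simp only [hsucc]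
  exact hr.comp (tendsto_nhdsWithin_iff.2 ⟨hlim, .of_forall fun n => (horbit n).1⟩)

/-- asymptotic rate of one-dimensional recursions `x_{n+1} = f(x_n)`
with `f(x) = x - c x^{1+p} + o(x^{1+p})` near `0⁺`. -/
theorem stmt_0 (f : ℝ → ℝ) (hf : ∀ x, 0 ≤ x → 0 ≤ f x) (c p : ℝ) (hc : 0 < c) (hp : 0 < p)
    (hasymp : Tendsto (fun x => (f x - x + c * x ^ (1 + p)) / x ^ (1 + p))
      (nhdsWithin 0 (Set.Ioi 0)) (nhds 0)) :
    ∃ δ > (0:ℝ), ∀ x₁ : ℝ, 0 < x₁ → x₁ < δ →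
      Tendsto (fun n : ℕ => f^[n] x₁) atTop (nhds 0) ∧
      Tendsto (fun n : ℕ => f^[n] x₁ * (c * p * (n : ℝ)) ^ (1 / p)) atTop (nhds 1) :=
  stmt_0_general f c p hc hp hasymp
end

section
/- Let (a_n) and (γ_n) be sequences of nonnegative reals satisfying a_{n+1} ≤ a_n - γ_n · a_n^{1+p} for some p > 0 and all n ≥ 1. Then for all n ≥ 1, a_{n+1} ≤ a_1 / (1 + p·a_1^p·∑_{k=1}^n γ_k)^{1/p}. -/
/-!
For `x > 0` the substitution `u = x⁻ᵖ` linearises the recursion: if `y ≤ x (1 - t)` with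
`t = g xᵖ ≤ 1`, then `yᵖ (1 + p t) ≤ xᵖ (1 + p t)(1 - t)ᵖ ≤ xᵖ` because `1 + s ≤ eˢ` bounds both
factors by `e^{pt}` and `e^{-pt}`; that is, `a (n+1)⁻ᵖ ≥ a n⁻ᵖ + p γ n`. Summing this from `1` to `n`
gives `a (n+1)⁻ᵖ ≥ a 1⁻ᵖ + p ∑ γ k`, which is the claim. Every estimate is kept in multiplied-out
form so that vanishing terms of the sequence need no separate treatment.
-/

open Real Finset

theorem one_add_mul_mul_one_sub_rpow_le_one {p t : ℝ} (hp : 0 ≤ p) (ht : t ≤ 1) :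
    (1 + p * t) * (1 - t) ^ p ≤ 1 :=
  calc (1 + p * t) * (1 - t) ^ p ≤ exp (p * t) * exp (-t) ^ p := by
        gcongr
        · linarith [add_one_le_exp (p * t)]
        · linarith [add_one_le_exp (-t)]
    _ = 1 := by rw [← exp_mul, ← exp_add, show p * t + -t * p = 0 by ring, exp_zero]

theorem rpow_mul_one_add_le_of_le_sub_mul_rpow {p x y g : ℝ} (hp : 0 < p) (hx : 0 ≤ x)
    (hy : 0 ≤ y) (hg : 0 ≤ g) (h : y ≤ x - g * x ^ (1 + p)) :
    y ^ p * (1 + p * g * x ^ p) ≤ x ^ p := by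
  set t := g * x ^ p
  have hyt : y ≤ x * (1 - t) := by
    rw [rpow_one_add' hx (by positivity)] at h
    linarith
  have ht1 : 0 ≤ 1 - t := by
    rcases hx.eq_or_lt with rfl | hx
    · simp [t, zero_rpow hp.ne']
    · exact nonneg_of_mul_nonneg_right (hy.trans hyt) hx
  calc y ^ p * (1 + p * g * x ^ p) ≤ (x * (1 - t)) ^ p * (1 + p * t) := by
        rw [mul_assoc p]
        gcongr
    _ = x ^ p * ((1 + p * t) * (1 - t) ^ p) := by rw [mul_rpow hx ht1]; ring
    _ ≤ x ^ p * 1 := by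
        gcongr
        exact one_add_mul_mul_one_sub_rpow_le_one hp.le (by linarith)
    _ = x ^ p := mul_one _

theorem rpow_mul_one_add_sum_le (a γ : ℕ → ℝ) {p : ℝ} (hp : 0 < p)
    (ha : ∀ n, 0 ≤ a n) (hγ : ∀ n, 0 ≤ γ n)
    (hrec : ∀ n ≥ 1, a (n + 1) ≤ a n - γ n * a n ^ (1 + p)) (n : ℕ) :
    a (n + 1) ^ p * (1 + p * a 1 ^ p * ∑ k ∈ Icc 1 n, γ k) ≤ a 1 ^ p := by
  induction n with
  | zero => simp
  | succ m ih =>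
    rw [sum_Icc_succ_top (by omega)]
    have hstep := rpow_mul_one_add_le_of_le_sub_mul_rpow hp (ha (m + 1)) (ha (m + 2))
      (hγ (m + 1)) (hrec (m + 1) (by omega))
    set X := a (m + 1) ^ p
    set Y := a (m + 2) ^ p
    set C := a 1 ^ p
    set S := ∑ k ∈ Icc 1 m, γ k
    have hX : 0 ≤ X := rpow_nonneg (ha _) p
    have hC : 0 ≤ C := rpow_nonneg (ha _) p
    have hS : 0 ≤ S := sum_nonneg fun k _ ↦ hγ k
    have hγm : 0 ≤ γ (m + 1) := hγ _
    refine le_of_mul_le_mul_right ?_ (by positivity : 0 < 1 + p * γ (m + 1) * X)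
    calc Y * (1 + p * C * (S + γ (m + 1))) * (1 + p * γ (m + 1) * X)
        ≤ X * (1 + p * C * (S + γ (m + 1))) := by
          rw [mul_right_comm]
          gcongr
      _ = X * (1 + p * C * S) + p * γ (m + 1) * C * X := by ring
      _ ≤ C + p * γ (m + 1) * C * X := by gcongr
      _ = C * (1 + p * γ (m + 1) * X) := by ring

theorem le_div_rpow_one_div_of_rpow_mul_le {p x c D : ℝ} (hp : 0 < p) (hx : 0 ≤ x) (hc : 0 ≤ c)
    (hD : 0 < D) (h : x ^ p * D ≤ c ^ p) : x ≤ c / D ^ (1 / p) := by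
  have hDp : 0 < D ^ (1 / p) := rpow_pos_of_pos hD _
  rw [le_div_iff₀ hDp, ← rpow_le_rpow_iff (by positivity) hc hp,
    mul_rpow hx hDp.le, one_div, rpow_inv_rpow hD.le hp.ne']
  exact h

/-- Polyak's lemma on numerical sequences. -/
theorem stmt_1 (a γ : ℕ → ℝ) (p : ℝ) (hp : 0 < p)
    (ha : ∀ n, 0 ≤ a n) (hγ : ∀ n, 0 ≤ γ n)
    (hrec : ∀ n ≥ 1, a (n + 1) ≤ a n - γ n * a n ^ (1 + p)) :
    ∀ n ≥ 1, a (n + 1) ≤ a 1 / (1 + p * a 1 ^ p * ∑ k ∈ Finset.Icc 1 n, γ k) ^ (1 / p) := by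
  intro n _
  have hD : 0 < 1 + p * a 1 ^ p * ∑ k ∈ Icc 1 n, γ k := by
    have := rpow_nonneg (ha 1) p
    have := sum_nonneg fun k (_ : k ∈ Icc 1 n) ↦ hγ k
    positivity
  exact le_div_rpow_one_div_of_rpow_mul_le hp (ha _) (ha 1) hD
    (rpow_mul_one_add_sum_le a γ hp ha hγ hrec n)
end

section
/- For the entropic regularizer h(x) = x·log x on [0,∞) with Bregman divergence D(p,x) = p·log(p/x) + x - p, the Legendre exponent of h at the point p = 0 equals 1/2; that is, 1/2 is the minimal λ ∈ [0,1] such that √(D(0,x)) = O(|x|^{1-λ}) as x → 0⁺. -/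
open Filter Topology

lemma aux_tendsto {c : ℝ} (hc : c < 0) :
    Tendsto (fun x : ℝ => x ^ c) (𝓝[>] (0:ℝ)) atTop := by
  have h1 : Tendsto (fun x : ℝ => x⁻¹ ^ (-c)) (𝓝[>] (0:ℝ)) atTop :=
    (tendsto_rpow_atTop (by linarith)).comp tendsto_inv_nhdsGT_zero
  refine h1.congr' ?_
  filter_upwards [self_mem_nhdsWithin] with x (hx : 0 < x)
  rw [Real.inv_rpow hx.le, ← Real.rpow_neg hx.le, neg_neg]

/-- the Legendre exponent of the entropic regularizer at `p = 0`
equals `1/2`; i.e. `1/2` is the minimal `λ ∈ [0,1]` such that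
`√(D(0,x)) = O(|x|^{1-λ})` as `x → 0⁺`, where `D(0,x) = x`. -/
theorem stmt_3 :
    IsLeast {l : ℝ | l ∈ Set.Icc (0:ℝ) 1 ∧
      ∃ C : ℝ, ∀ᶠ x in nhdsWithin 0 (Set.Ioi 0),
        Real.sqrt (0 * Real.log (0 / x) + x - 0) / |x - 0| ^ (1 - l) ≤ C} (1 / 2) := by
  constructor
  · refine ⟨⟨by norm_num, by norm_num⟩, 1, ?_⟩
    filter_upwards [self_mem_nhdsWithin] with x (hx : 0 < x)
    have hx0 : (0:ℝ) ≤ x := hx.le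
    rw [zero_mul, zero_add, sub_zero, abs_of_pos hx,
      Real.sqrt_eq_rpow]
    norm_num
    exact le_of_eq (div_self (by positivity))
  · rintro l ⟨⟨hl0, hl1⟩, C, hC⟩
    by_contra hlt
    push_neg at hlt
    have hc : l - (1/2 : ℝ) < 0 := by linarith
    have htend := aux_tendsto hc
    have hev : ∀ᶠ x in 𝓝[>] (0:ℝ), C < x ^ (l - 1/2) :=
      htend.eventually_gt_atTop C
    have : ∀ᶠ x in 𝓝[>] (0:ℝ), False := by
      filter_upwards [hC, hev, self_mem_nhdsWithin] with x h1 h2 (hx : 0 < x)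
      rw [zero_mul, zero_add, sub_zero, abs_of_pos hx,
        Real.sqrt_eq_rpow, ← Real.rpow_sub hx] at h1
      have : l - 1/2 = 1/2 - (1 - l) := by ring
      rw [this] at h2
      linarith
    obtain ⟨x, hx⟩ := this.exists
    exact hx
end

section
/- For the Tsallis regularizer h(x) = (x - x^q)/(q(1-q)) on [0,∞) with 0 < q < 1, the Bregman divergence satisfies D(0, x) = x^q/q for x > 0, and consequently the Legendre exponent of h at 0 equals 1 - q/2. -/
open Filter Topology

/-! The divergence `D(0, x)` is an explicit computation, and `√(x^q/q) / x^(1-λ)` is a constant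
multiple of `x^(q/2 - (1-λ))`, which stays bounded as `x → 0⁺` exactly when `q/2 - (1-λ) ≥ 0`.
Hence the admissible exponents form the interval `[1 - q/2, 1]`. -/

theorem tsallis_bregman_zero {q x : ℝ} (hq0 : q ≠ 0) (hq1 : q ≠ 1) (hx : x ≠ 0) :
    ((0:ℝ) - (0:ℝ) ^ q) / (q * (1 - q)) - (x - x ^ q) / (q * (1 - q))
      - (1 - q * x ^ (q - 1)) / (q * (1 - q)) * (0 - x) = x ^ q / q := by
  have hq1' : 1 - q ≠ 0 := sub_ne_zero.mpr (Ne.symm hq1)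
  have hxq : x ^ (q - 1) * x = x ^ q := by
    rw [← Real.rpow_add_one hx]; ring_nf
  rw [Real.zero_rpow hq0]
  field_simp
  linear_combination (-q) * hxq

theorem sqrt_rpow_div_div_abs_rpow {q x : ℝ} (hx : 0 < x) (l : ℝ) :
    Real.sqrt (x ^ q / q) / |x - 0| ^ (1 - l) = x ^ (q / 2 - (1 - l)) / Real.sqrt q := by
  rw [sub_zero, abs_of_pos hx, Real.sqrt_div (Real.rpow_nonneg hx.le q),
    Real.sqrt_eq_rpow (x ^ q), ← Real.rpow_mul hx.le, div_right_comm, ← Real.rpow_sub hx]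
  ring_nf

theorem exists_eventually_rpow_div_le_iff {e s : ℝ} (hs : 0 < s) :
    (∃ C : ℝ, ∀ᶠ x in 𝓝[>] (0:ℝ), x ^ e / s ≤ C) ↔ 0 ≤ e := by
  constructor
  · rintro ⟨C, hC⟩
    by_contra! he
    have hunbounded := ((tendsto_rpow_neg_nhdsGT_zero he).atTop_div_const hs).eventually_gt_atTop C
    obtain ⟨x, hle, hgt⟩ := (hC.and hunbounded).exists
    exact hle.not_gt hgt
  · intro he
    refine ⟨1 / s, ?_⟩
    filter_upwards [Ioo_mem_nhdsGT zero_lt_one] with x ⟨hx0, hx1⟩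
    gcongr
    exact Real.rpow_le_one hx0.le hx1.le he

theorem setOf_sqrt_rpow_div_abs_rpow_bounded_eq_Icc {q : ℝ} (hq0 : 0 < q) (hq2 : q ≤ 2) :
    {l : ℝ | l ∈ Set.Icc (0:ℝ) 1 ∧
      ∃ C : ℝ, ∀ᶠ x in 𝓝[>] (0:ℝ), Real.sqrt (x ^ q / q) / |x - 0| ^ (1 - l) ≤ C} =
      Set.Icc (1 - q / 2) 1 := by
  ext l
  have hratio : ∀ C : ℝ, (∀ᶠ x in 𝓝[>] (0:ℝ), Real.sqrt (x ^ q / q) / |x - 0| ^ (1 - l) ≤ C) ↔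
      ∀ᶠ x in 𝓝[>] (0:ℝ), x ^ (q / 2 - (1 - l)) / Real.sqrt q ≤ C := fun C =>
    eventually_congr (eventually_mem_nhdsWithin.mono fun x hx => by
      rw [sqrt_rpow_div_div_abs_rpow hx])
  simp only [Set.mem_ofPred_eq, Set.mem_Icc, hratio,
    exists_eventually_rpow_div_le_iff (Real.sqrt_pos.mpr hq0)]
  constructor
  · rintro ⟨⟨-, hl1⟩, he⟩
    exact ⟨by linarith, hl1⟩
  · rintro ⟨hl, hl1⟩
    exact ⟨⟨by linarith, hl1⟩, by linarith⟩

/-- for the Tsallis regularizer `h(x) = (x - x^q)/(q(1-q))` with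
`0 < q < 1`, one has `D(0,x) = x^q/q` for `x > 0`, and the Legendre exponent of
`h` at `0` equals `1 - q/2`. -/
theorem stmt_4 (q : ℝ) (hq0 : 0 < q) (hq1 : q < 1) :
    (∀ x : ℝ, 0 < x →
      ((0:ℝ) - (0:ℝ) ^ q) / (q * (1 - q)) - (x - x ^ q) / (q * (1 - q))
        - (1 - q * x ^ (q - 1)) / (q * (1 - q)) * (0 - x) = x ^ q / q) ∧
    sInf {l : ℝ | l ∈ Set.Icc (0:ℝ) 1 ∧
      ∃ C : ℝ, ∀ᶠ x in nhdsWithin 0 (Set.Ioi 0),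
        Real.sqrt (x ^ q / q) / |x - 0| ^ (1 - l) ≤ C} = 1 - q / 2 := by
  refine ⟨fun x hx => tsallis_bregman_zero hq0.ne' hq1.ne hx.ne', ?_⟩
  rw [setOf_sqrt_rpow_div_abs_rpow_bounded_eq_Icc hq0 (by linarith), csInf_Icc (by linarith)]
end

section
/- For the Hellinger regularizer h(x) = -√(1 - x²) on [-1,1], the Bregman divergence satisfies D(1, x) = √((1-x)/(1+x)) for x ∈ (-1,1), which is Θ(|x - 1|^{1/2}) as x → 1⁻; hence the Legendre exponent of h at 1 equals 3/4. -/
/-!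
On `(-1, 1)` one has `D(1, x) = (1 - x) / √(1 - x²) = √((1 - x) / (1 + x))`, which for
`0 ≤ x < 1` lies between `√(1 - x) / 2` and `√(1 - x)`. Whenever `D(p, x) ≍ |x - p| ^ α`, the
quotient `√D(p, x) / |x - p| ^ (1 - λ)` is of order `|x - p| ^ (α / 2 - (1 - λ))`, which stays
bounded as `x → p` iff `λ ≥ 1 - α / 2`. So the Legendre exponent is `1 - α / 2`, here `3 / 4`.
-/

open Filter Topology Set

lemma sqrt_mul_rpow_div_rpow (c : ℝ) {t : ℝ} (ht : 0 < t) (α β : ℝ) :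
    √(c * t ^ α) / t ^ β = √c * t ^ (α / 2 - β) := by
  rw [Real.sqrt_mul' _ (by positivity), Real.sqrt_eq_rpow (t ^ α), ← Real.rpow_mul ht.le,
    Real.rpow_sub ht, mul_div_assoc, mul_one_div]

section LegendreExponent

variable {ι : Type*} {L : Filter ι} {u D : ι → ℝ} {α β : ℝ}

lemma exists_eventually_sqrt_div_rpow_le (hu : Tendsto u L (𝓝[>] 0)) {C : ℝ}
    (hD : ∀ᶠ x in L, D x ≤ C * u x ^ α) (hβ : β ≤ α / 2) :
    ∃ B, ∀ᶠ x in L, √(D x) / u x ^ β ≤ B := by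
  refine ⟨√C, ?_⟩
  filter_upwards [hD, hu (Ioc_mem_nhdsGT one_pos)] with x hDx ⟨hu₀, hu₁⟩
  calc √(D x) / u x ^ β ≤ √(C * u x ^ α) / u x ^ β := by gcongr
    _ = √C * u x ^ (α / 2 - β) := sqrt_mul_rpow_div_rpow C hu₀ α β
    _ ≤ √C := mul_le_of_le_one_right (Real.sqrt_nonneg _)
        (Real.rpow_le_one hu₀.le hu₁ (by linarith))

lemma tendsto_sqrt_div_rpow_atTop (hu : Tendsto u L (𝓝[>] 0)) {c : ℝ} (hc : 0 < c)
    (hD : ∀ᶠ x in L, c * u x ^ α ≤ D x) (hβ : α / 2 < β) :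
    Tendsto (fun x => √(D x) / u x ^ β) L atTop := by
  have hpow : Tendsto (fun x => √c * u x ^ (α / 2 - β)) L atTop :=
    ((tendsto_rpow_neg_nhdsGT_zero (by linarith)).comp hu).const_mul_atTop (Real.sqrt_pos.2 hc)
  refine tendsto_atTop_mono' L ?_ hpow
  filter_upwards [hD, hu self_mem_nhdsWithin] with x hDx (hu₀ : 0 < u x)
  calc √c * u x ^ (α / 2 - β) = √(c * u x ^ α) / u x ^ β :=
        (sqrt_mul_rpow_div_rpow c hu₀ α β).symm
    _ ≤ √(D x) / u x ^ β := by gcongr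

lemma exists_eventually_sqrt_div_rpow_le_iff [L.NeBot] (hu : Tendsto u L (𝓝[>] 0)) {c C : ℝ}
    (hc : 0 < c) (hlow : ∀ᶠ x in L, c * u x ^ α ≤ D x) (hup : ∀ᶠ x in L, D x ≤ C * u x ^ α) :
    (∃ B, ∀ᶠ x in L, √(D x) / u x ^ β ≤ B) ↔ β ≤ α / 2 := by
  refine ⟨fun ⟨B, hB⟩ => ?_, exists_eventually_sqrt_div_rpow_le hu hup⟩
  by_contra! hβ
  obtain ⟨x, hgt, hle⟩ :=
    (((tendsto_sqrt_div_rpow_atTop hu hc hlow hβ).eventually_gt_atTop B).and hB).exists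
  linarith

/-- With `L = 𝓝[dom h] p`, `u x = |x - p|` and `D x = D(p, x)` this is the Legendre exponent
of `h` at `p`. -/
noncomputable def legendreExponent (L : Filter ι) (u D : ι → ℝ) : ℝ :=
  sInf {l : ℝ | l ∈ Icc 0 1 ∧ ∃ C, ∀ᶠ x in L, √(D x) / u x ^ (1 - l) ≤ C}

theorem legendreExponent_eq_of_rpow_bounds [L.NeBot] (hu : Tendsto u L (𝓝[>] 0)) {c C : ℝ}
    (hc : 0 < c) (hlow : ∀ᶠ x in L, c * u x ^ α ≤ D x) (hup : ∀ᶠ x in L, D x ≤ C * u x ^ α)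
    (hα₀ : 0 ≤ α) (hα₂ : α ≤ 2) :
    legendreExponent L u D = 1 - α / 2 := by
  have hset : {l : ℝ | l ∈ Icc 0 1 ∧ ∃ C, ∀ᶠ x in L, √(D x) / u x ^ (1 - l) ≤ C} =
      Icc (1 - α / 2) 1 := by
    ext l
    simp only [mem_ofPred_eq, mem_Icc, exists_eventually_sqrt_div_rpow_le_iff hu hc hlow hup]
    constructor
    · rintro ⟨⟨-, hl₁⟩, hl⟩
      exact ⟨by linarith, hl₁⟩
    · rintro ⟨hl₀, hl₁⟩
      exact ⟨⟨by linarith, hl₁⟩, by linarith⟩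
  rw [legendreExponent, hset, csInf_Icc (by linarith)]

end LegendreExponent

lemma hellinger_bregman_one_eq {x : ℝ} (h₁ : -1 < x) (h₂ : x < 1) :
    -√(1 - 1 ^ 2) - (-√(1 - x ^ 2)) - x / √(1 - x ^ 2) * (1 - x) = √((1 - x) / (1 + x)) := by
  have hpos : 0 < 1 - x ^ 2 := by nlinarith
  have hrhs : √((1 - x) / (1 + x)) = (1 - x) / √(1 - x ^ 2) := by
    rw [show (1 - x) / (1 + x) = (1 - x) ^ 2 / (1 - x ^ 2) by
        rw [div_eq_div_iff (by linarith) hpos.ne']; ring,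
      Real.sqrt_div (by positivity), Real.sqrt_sq (by linarith)]
  have hs : 0 < √(1 - x ^ 2) := Real.sqrt_pos.2 hpos
  rw [hrhs, one_pow, sub_self, Real.sqrt_zero]
  field_simp
  nlinarith [Real.sq_sqrt hpos.le]

lemma sqrt_one_sub_div_one_add_bounds {x : ℝ} (h₀ : 0 ≤ x) (h₁ : x ≤ 1) :
    1 / 2 * |x - 1| ^ (1 / 2 : ℝ) ≤ √((1 - x) / (1 + x)) ∧
      √((1 - x) / (1 + x)) ≤ 1 * |x - 1| ^ (1 / 2 : ℝ) := by
  rw [abs_sub_comm, abs_of_nonneg (by linarith), ← Real.sqrt_eq_rpow]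
  constructor
  · calc 1 / 2 * √(1 - x) = √((1 - x) / 4) := by
          rw [Real.sqrt_div' _ (by norm_num : (0:ℝ) ≤ 4), show (4:ℝ) = 2 ^ 2 by norm_num,
            Real.sqrt_sq (by norm_num)]
          ring
      _ ≤ √((1 - x) / (1 + x)) := by
          gcongr
          linarith
  · rw [one_mul]
    gcongr
    exact div_le_self (by linarith) (by linarith)

/-- for the Hellinger regularizer `h(x) = -√(1-x²)` on `[-1,1]`,
`D(1,x) = √((1-x)/(1+x))` for `x ∈ (-1,1)`, which is `Θ(|x-1|^{1/2})` as
`x → 1⁻`; hence the Legendre exponent of `h` at `1` equals `3/4`. -/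
theorem stmt_5 :
    (∀ x : ℝ, -1 < x → x < 1 →
      -Real.sqrt (1 - 1 ^ 2) - (-Real.sqrt (1 - x ^ 2))
        - x / Real.sqrt (1 - x ^ 2) * (1 - x) = Real.sqrt ((1 - x) / (1 + x))) ∧
    (∃ c > (0:ℝ), ∃ C > (0:ℝ), ∀ᶠ x in nhdsWithin 1 (Set.Ico (-1:ℝ) 1),
      c * |x - 1| ^ ((1:ℝ) / 2) ≤ Real.sqrt ((1 - x) / (1 + x)) ∧
      Real.sqrt ((1 - x) / (1 + x)) ≤ C * |x - 1| ^ ((1:ℝ) / 2)) ∧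
    sInf {l : ℝ | l ∈ Set.Icc (0:ℝ) 1 ∧
      ∃ C : ℝ, ∀ᶠ x in nhdsWithin 1 (Set.Ico (-1:ℝ) 1),
        Real.sqrt (Real.sqrt ((1 - x) / (1 + x))) / |x - 1| ^ (1 - l) ≤ C} = 3 / 4 := by
  rw [nhdsWithin_Ico_eq_nhdsLT (by norm_num)]
  have hbounds : ∀ᶠ x in 𝓝[<] (1:ℝ),
      1 / 2 * |x - 1| ^ (1 / 2 : ℝ) ≤ √((1 - x) / (1 + x)) ∧
        √((1 - x) / (1 + x)) ≤ 1 * |x - 1| ^ (1 / 2 : ℝ) := by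
    filter_upwards [Ico_mem_nhdsLT zero_lt_one] with x hx
    exact sqrt_one_sub_div_one_add_bounds hx.1 hx.2.le
  have hdist : Tendsto (fun x : ℝ => |x - 1|) (𝓝[<] 1) (𝓝[>] 0) :=
    (tendsto_norm_sub_self_nhdsNE (1:ℝ)).mono_left
      (nhdsWithin_mono 1 fun _ hx => (mem_Iio.1 hx).ne)
  refine ⟨fun _ => hellinger_bregman_one_eq, ⟨1 / 2, by norm_num, 1, one_pos, hbounds⟩, ?_⟩
  change legendreExponent (𝓝[<] 1) (fun x => |x - 1|) (fun x => √((1 - x) / (1 + x))) = 3 / 4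
  rw [legendreExponent_eq_of_rpow_bounds hdist (by norm_num : (0:ℝ) < 1 / 2)
    (hbounds.mono fun _ h => h.1) (hbounds.mono fun _ h => h.2) (by norm_num) (by norm_num)]
  norm_num
end

section
/- Let V : X → ℝⁿ* satisfy the second-order sufficiency condition ⟨V(x) - V(x*), x - x*⟩ ≥ μ‖x - x*‖² for all x in a convex neighborhood B of a solution x* of the variational inequality (so ⟨V(x*), x - x*⟩ ≥ 0 for all x ∈ X). Then for all x ∈ X, y ∈ B, and c ∈ [0,1]: ⟨V(y) - c·V(x*), y - x*⟩ ≥ (μ/2)‖x - x*‖² - μ‖y - x‖². -/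
theorem norm_sub_sq_le_two_mul_add {E : Type*} [SeminormedAddCommGroup E] {x y z : E} :
    ‖x - z‖ ^ 2 ≤ 2 * ‖y - z‖ ^ 2 + 2 * ‖y - x‖ ^ 2 := by
  have htri : ‖x - z‖ ≤ ‖y - z‖ + ‖y - x‖ := by
    rw [norm_sub_rev y x, add_comm]
    exact norm_sub_le_norm_sub_add_norm_sub x y z
  calc ‖x - z‖ ^ 2 ≤ (‖y - z‖ + ‖y - x‖) ^ 2 := by gcongr
    _ ≤ 2 * ‖y - z‖ ^ 2 + 2 * ‖y - x‖ ^ 2 := by linarith [add_sq_le (a := ‖y - z‖) (b := ‖y - x‖)]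

theorem inner_sub_le_inner_sub_smul {E : Type*} [SeminormedAddCommGroup E] [InnerProductSpace ℝ E]
    {v w d : E} {c : ℝ} (hw : 0 ≤ inner ℝ w d) (hc : c ≤ 1) :
    inner ℝ (v - w) d ≤ inner ℝ (v - c • w) d := by
  have hsplit : inner ℝ (v - c • w) d = inner ℝ (v - w) d + (1 - c) * inner ℝ w d := by
    simp only [inner_sub_left, inner_smul_left, RCLike.conj_to_real]
    ring
  rw [hsplit]
  have : 0 ≤ (1 - c) * inner ℝ w d := mul_nonneg (by linarith) hw
  linarith

theorem stmt_11_general {n : ℕ} (X : Set (EuclideanSpace ℝ (Fin n)))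
    (V : EuclideanSpace ℝ (Fin n) → EuclideanSpace ℝ (Fin n))
    (xs : EuclideanSpace ℝ (Fin n))
    (B : Set (EuclideanSpace ℝ (Fin n))) (hBX : B ⊆ X)
    (μ : ℝ) (hμ : 0 < μ)
    (hVI : ∀ x ∈ X, 0 ≤ (inner ℝ (V xs) (x - xs) : ℝ))
    (hSOS : ∀ x ∈ B, μ * ‖x - xs‖ ^ 2 ≤ (inner ℝ (V x - V xs) (x - xs) : ℝ)) :
    ∀ x ∈ X, ∀ y ∈ B, ∀ c ∈ Set.Icc (0:ℝ) 1,
      μ / 2 * ‖x - xs‖ ^ 2 - μ * ‖y - x‖ ^ 2 ≤ (inner ℝ (V y - c • V xs) (y - xs) : ℝ) := by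
  intro x _ y hy c hc
  calc μ / 2 * ‖x - xs‖ ^ 2 - μ * ‖y - x‖ ^ 2
      ≤ μ / 2 * (2 * ‖y - xs‖ ^ 2 + 2 * ‖y - x‖ ^ 2) - μ * ‖y - x‖ ^ 2 := by
        gcongr; exact norm_sub_sq_le_two_mul_add
    _ = μ * ‖y - xs‖ ^ 2 := by ring
    _ ≤ inner ℝ (V y - V xs) (y - xs) := hSOS y hy
    _ ≤ inner ℝ (V y - c • V xs) (y - xs) := inner_sub_le_inner_sub_smul (hVI y (hBX hy)) hc.2

/-- lower bound from second-order sufficiency near a VI solution. -/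
theorem stmt_11 {n : ℕ} (X : Set (EuclideanSpace ℝ (Fin n)))
    (hXc : IsClosed X) (hXconv : Convex ℝ X)
    (V : EuclideanSpace ℝ (Fin n) → EuclideanSpace ℝ (Fin n))
    (xs : EuclideanSpace ℝ (Fin n)) (hxs : xs ∈ X)
    (B : Set (EuclideanSpace ℝ (Fin n))) (hBX : B ⊆ X) (hBconv : Convex ℝ B)
    (hBnhd : B ∈ nhdsWithin xs X) (μ : ℝ) (hμ : 0 < μ)
    (hVI : ∀ x ∈ X, 0 ≤ (inner ℝ (V xs) (x - xs) : ℝ))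
    (hSOS : ∀ x ∈ B, μ * ‖x - xs‖ ^ 2 ≤ (inner ℝ (V x - V xs) (x - xs) : ℝ)) :
    ∀ x ∈ X, ∀ y ∈ B, ∀ c ∈ Set.Icc (0:ℝ) 1,
      μ / 2 * ‖x - xs‖ ^ 2 - μ * ‖y - x‖ ^ 2 ≤ (inner ℝ (V y - c • V xs) (y - xs) : ℝ) :=
  stmt_11_general X V xs B hBX μ hμ hVI hSOS
end
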